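/- arXiv:1211.5190 — 3 statements merged into one kernel-verified Lean document; each statement's English description precedes it below -/
import Mathlib

section
/- Soundness of rule (R3): for any state m of a continuous Markov kernel with finite measures θ(a)(m) and any s ∈ ℚ≥0, it cannot be that m satisfies L^a_r φ for all rationals r > s; i.e., the set of formulas {L^a_r φ : r > s} is unsatisfiable. -/
open MeasureTheory
open scoped NNReal ENNReal

inductive Formula (A : Type) : Type
  | top : Formula A
  | neg : Formula A → Formula A
  | and : Formula A → Formula A → Formula A
  | L : A → ℚ≥0 → Formula A → Formula A
  | M : A → ℚ≥0 → Formula A → Formula A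

noncomputable def sat {A : Type} {W : Type*} [MeasurableSpace W]
    (θ : A → W → Measure W) : Formula A → Set W
  | .top => Set.univ
  | .neg φ => (sat θ φ)ᶜ
  | .and φ ψ => sat θ φ ∩ sat θ ψ
  | .L a r φ => {m | ((r : ℝ≥0) : ℝ≥0∞) ≤ θ a m (sat θ φ)}
  | .M a r φ => {m | θ a m (sat θ φ) ≤ ((r : ℝ≥0) : ℝ≥0∞)}

/-- The σ-algebra on measures generated by the sets F(S,r) = {μ : μ S ≥ r}. -/
def measSigma (W : Type*) [MeasurableSpace W] : MeasurableSpace (Measure W) :=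
  MeasurableSpace.generateFrom
    {F | ∃ (S : Set W) (r : ℝ≥0), MeasurableSet S ∧ 0 < r ∧
      F = {μ : Measure W | (r : ℝ≥0∞) ≤ μ S}}

theorem ENNReal.exists_nnrat_gt_of_ne_top {x : ℝ≥0∞} (hx : x ≠ ⊤) (s : ℚ≥0) :
    ∃ r : ℚ≥0, s < r ∧ x < ((r : ℝ≥0) : ℝ≥0∞) := by
  obtain ⟨n, hn⟩ := ENNReal.exists_nat_gt (max_ne_top hx (coe_ne_top (r := (s : ℝ≥0))))
  have hsn : ((s : ℝ≥0) : ℝ≥0∞) < n := (le_max_right _ _).trans_lt hn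
  refine ⟨n, by exact_mod_cast hsn, (le_max_left _ _).trans_lt (by simpa using hn)⟩

theorem soundness_R3 {A : Type} {W : Type*} [MeasurableSpace W]
    (θ : A → W → Measure W)
    (hfin : ∀ a m, IsFiniteMeasure (θ a m))
    (a : A) (s : ℚ≥0) (φ : Formula A) (m : W) :
    ¬ (∀ r : ℚ≥0, s < r → m ∈ sat θ (Formula.L a r φ)) := by
  intro h
  have := hfin a m
  obtain ⟨r, hsr, hr⟩ := ENNReal.exists_nnrat_gt_of_ne_top (measure_ne_top (θ a m) (sat θ φ)) s
  exact (h r hsr).not_gt hr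
end

section
/- Soundness of the Countable Additivity Rule: let Φ be a countable set of formulas and φ a formula such that every model satisfying all of Φ satisfies φ. If a state m of a continuous Markov kernel satisfies L^a_r(ψ) for every finite conjunction ψ of elements of Φ (equivalently, θ(a)(m)(⟦ψ⟧) ≥ r for every such ψ), then θ(a)(m)(⟦φ⟧) ≥ r. Equivalently stated for measures: if (S_i) is a countable family of measurable sets with ⋂_i S_i ⊆ T measurable, μ a finite measure, and μ(S_1 ∩ … ∩ S_k) ≥ r for every k, then μ(T) ≥ r. -/
open MeasureTheory
open scoped NNReal ENNReal

theorem soundness_CAR_general {M : Type*} [MeasurableSpace M]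
    (μ : Measure M) [IsFiniteMeasure μ]
    (S : ℕ → Set M) (hS : ∀ i, MeasurableSet (S i))
    (T : Set M)
    (hsub : (⋂ i, S i) ⊆ T)
    (r : ℝ≥0)
    (h : ∀ k : ℕ, (r : ℝ≥0∞) ≤ μ (⋂ i ≤ k, S i)) :
    (r : ℝ≥0∞) ≤ μ T :=
  calc (r : ℝ≥0∞) ≤ ⨅ k, μ (⋂ i ≤ k, S i) := le_iInf h
    _ = μ (⋂ i, S i) :=
      (measure_iInter_eq_iInf_measure_iInter_le (fun i ↦ (hS i).nullMeasurableSet)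
        ⟨0, measure_ne_top μ _⟩).symm
    _ ≤ μ T := measure_mono hsub

theorem soundness_CAR {M : Type*} [MeasurableSpace M]
    (μ : Measure M) [IsFiniteMeasure μ]
    (S : ℕ → Set M) (hS : ∀ i, MeasurableSet (S i))
    (T : Set M) (hT : MeasurableSet T)
    (hsub : (⋂ i, S i) ⊆ T)
    (r : ℝ≥0)
    (h : ∀ k : ℕ, (r : ℝ≥0∞) ≤ μ (⋂ i ≤ k, S i)) :
    (r : ℝ≥0∞) ≤ μ T :=
  soundness_CAR_general μ S hS T hsub r h
end

section
/- Define, for Markov processes P = (M,m) and formulas φ, the satisfaction-distance d(P,φ) by: d(P,⊤)=0; d(P,¬φ)=1−d(P,φ); d(P,φ∧ψ)=max(d(P,φ),d(P,ψ)); d(P,L^a_r φ)=max(r−θ(a)(m)(⟦φ⟧),0); d(P,M^a_r φ)=max(θ(a)(m)(⟦φ⟧)−r,0). Then two processes P and P' satisfy: [for all formulas φ, d(P,φ)=d(P',φ)] if and only if for every formula φ and every a, r one has θ_P(a)(m)(⟦φ⟧)=θ_{P'}(a)(m')(⟦φ⟧), i.e., P and P' are logically equivalent (and hence stochastically bisimilar).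 -/
open MeasureTheory
open scoped NNReal ENNReal

/-- The satisfaction-distance d((M,m),φ). -/
noncomputable def dval {A : Type} {W : Type*} [MeasurableSpace W]
    (θ : A → W → Measure W) (m : W) : Formula A → ℝ
  | .top => 0
  | .neg φ => 1 - dval θ m φ
  | .and φ ψ => max (dval θ m φ) (dval θ m ψ)
  | .L a r φ => max ((r : ℝ) - (θ a m (sat θ φ)).toReal) 0
  | .M a r φ => max ((θ a m (sat θ φ)).toReal - (r : ℝ)) 0

section

variable {A : Type} {W W' : Type*} [MeasurableSpace W] [MeasurableSpace W']

theorem dval_eq_of_measure_sat_eq (θ : A → W → Measure W) (θ' : A → W' → Measure W')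
    (m : W) (m' : W') (h : ∀ (φ : Formula A) (a : A), θ a m (sat θ φ) = θ' a m' (sat θ' φ))
    (φ : Formula A) : dval θ m φ = dval θ' m' φ := by
  induction φ with
  | top => rfl
  | neg φ ih => simp only [dval, ih]
  | and φ ψ ihφ ihψ => simp only [dval, ihφ, ihψ]
  | L a r φ => simp only [dval, h φ a]
  | M a r φ => simp only [dval, h φ a]

theorem dval_L_of_le (θ : A → W → Measure W) (m : W) (a : A) (r : ℚ≥0) (φ : Formula A)
    (hr : (θ a m (sat θ φ)).toReal ≤ r) :
    dval θ m (.L a r φ) = r - (θ a m (sat θ φ)).toReal :=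
  max_eq_left (sub_nonneg.2 hr)

theorem toReal_measure_sat_eq_of_dval_eq (θ : A → W → Measure W) (θ' : A → W' → Measure W')
    (m : W) (m' : W') (h : ∀ φ : Formula A, dval θ m φ = dval θ' m' φ)
    (a : A) (φ : Formula A) :
    (θ a m (sat θ φ)).toReal = (θ' a m' (sat θ' φ)).toReal := by
  obtain ⟨n, hn⟩ := exists_nat_ge (max (θ a m (sat θ φ)).toReal (θ' a m' (sat θ' φ)).toReal)
  have hL := h (.L a n φ)
  rw [dval_L_of_le θ m a n φ (by exact_mod_cast le_of_max_le_left hn),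
    dval_L_of_le θ' m' a n φ (by exact_mod_cast le_of_max_le_right hn)] at hL
  linarith

end

theorem dist_eq_iff_logically_equiv {A : Type} {W W' : Type*}
    [MeasurableSpace W] [MeasurableSpace W']
    (θ : A → W → Measure W) (θ' : A → W' → Measure W')
    (hfin : ∀ a m, IsFiniteMeasure (θ a m))
    (hfin' : ∀ a m, IsFiniteMeasure (θ' a m))
    (m : W) (m' : W') :
    (∀ φ : Formula A, dval θ m φ = dval θ' m' φ) ↔
    (∀ (φ : Formula A) (a : A), θ a m (sat θ φ) = θ' a m' (sat θ' φ)) := by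
  refine ⟨fun h φ a => ?_, dval_eq_of_measure_sat_eq θ θ' m m'⟩
  -- `toReal` sends `∞` to `0`, so recovering the masses from distances needs finiteness.
  have := hfin a m
  have := hfin' a m'
  exact (ENNReal.toReal_eq_toReal_iff' (measure_ne_top _ _) (measure_ne_top _ _)).1
    (toReal_measure_sat_eq_of_dval_eq θ θ' m m' h a φ)
end
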